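/- arXiv:math/0509368 — 2 statements merged into one kernel-verified Lean document; each statement's English description precedes it below -/
import Mathlib

section
/- Let μ, ν ∈ ℂ, c ≠ 0, m, r, s ∈ ℤ^N, g ∈ ġ and 1 ≤ a, b ≤ N. In the g(μ,ν)-module V_g(c) the following identities hold: (t₀t^s k₀)·(t₀^{-1}t^r k_a)·q^{m−r} = 0; (t₀t^s k_b)·(t₀^{-1}t^r k_a)·q^{m−r} = 0; (t₀t^s⊗g)·(t₀^{-1}t^r k_a)·q^{m−r} = 0; (t₀t^s d̃₀)·(t₀^{-1}t^r k_a)·q^{m−r} = 0; (t₀t^s d̃_b)·(t₀^{-1}t^r k_a)·q^{m−r} = c·δ_{ab}·q^{m+s}. -/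
namespace ToroidalPaper

noncomputable section

/-- multi-indices r ∈ ℤ^{N+1} -/
abbrev Idx (N : ℕ) := Fin (N + 1) → ℤ

/-- The model for the 1-forms Ω¹_R: the free module on k₀,…,k_N over R,
written in the monomial basis t^r k_p. -/
abbrev OmegaR (N : ℕ) := Idx N →₀ (Fin (N + 1) → ℂ)

/-- The subspace d(R) ⊆ Ω¹_R of exact forms: d(t^r) = Σ_p r_p t^r k_p. -/
def dR (N : ℕ) : Submodule ℂ (OmegaR N) :=
  Submodule.span ℂ {w : OmegaR N | ∃ r : Idx N, w = Finsupp.single r fun p => (r p : ℂ)}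

/-- K = Ω¹_R / d(R) -/
abbrev Kmod (N : ℕ) := OmegaR N ⧸ dR N

variable (N : ℕ) (g : Type) [LieRing g] [LieAlgebra ℂ g]

/-- The underlying vector space of the full toroidal Lie algebra:
(R ⊗ ġ) ⊕ K ⊕ D, where R ⊗ ġ is modeled as `Idx N →₀ g` (coefficient of t^r)
and D as `Idx N →₀ (Fin (N+1) → ℂ)` (coefficients of t^r d_p). -/
abbrev Carrier := (Idx N →₀ g) × Kmod N × (Idx N →₀ (Fin (N + 1) → ℂ))

/-- A realization of the vector space (R⊗ġ) ⊕ K ⊕ D as a Lie algebra: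
a Lie algebra `G` together with a linear identification with the model. -/
structure Tor where
  G : Type
  [instLieRing : LieRing G]
  [instLieAlgebra : LieAlgebra ℂ G]
  e : G ≃ₗ[ℂ] Carrier N g

attribute [instance] Tor.instLieRing Tor.instLieAlgebra

namespace Tor

variable {N g}
variable (T : Tor N g)

/-- the element t^r ⊗ x of R ⊗ ġ -/
def tg (r : Idx N) (x : g) : T.G := T.e.symm (Finsupp.single r x, 0, 0)

/-- the element t^r k_p of K -/
def k (r : Idx N) (p : Fin (N + 1)) : T.G :=
  T.e.symm (0, Submodule.Quotient.mk (p := dR N) (Finsupp.single r (Pi.single p 1)), 0)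

/-- the element t^r d_p of D -/
def d (r : Idx N) (p : Fin (N + 1)) : T.G :=
  T.e.symm (0, 0, Finsupp.single r (Pi.single p 1))

/-- t^m · d(t^r) = Σ_p r_p t^{r+m} k_p -/
def kSum (r m : Idx N) : T.G := ∑ p : Fin (N + 1), (r p : ℂ) • T.k (r + m) p

/-- The bracket relations of the full toroidal Lie algebra g(μ,ν). -/
structure IsToroidal (B : g →ₗ[ℂ] g →ₗ[ℂ] ℂ) (μ ν : ℂ) : Prop where
  br_gg : ∀ (r m : Idx N) (x y : g),
    ⁅T.tg r x, T.tg m y⁆ = T.tg (r + m) ⁅x, y⁆ + B x y • T.kSum r m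
  br_kg : ∀ (r m : Idx N) (p : Fin (N + 1)) (x : g), ⁅T.k r p, T.tg m x⁆ = 0
  br_kk : ∀ (r m : Idx N) (p q : Fin (N + 1)), ⁅T.k r p, T.k m q⁆ = 0
  br_dg : ∀ (r m : Idx N) (a : Fin (N + 1)) (x : g),
    ⁅T.d r a, T.tg m x⁆ = (m a : ℂ) • T.tg (r + m) x
  br_dk : ∀ (r m : Idx N) (a b : Fin (N + 1)),
    ⁅T.d r a, T.k m b⁆ = (m a : ℂ) • T.k (r + m) b
      + (if a = b then (1 : ℂ) else 0) • T.kSum r m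
  br_dd : ∀ (r m : Idx N) (a b : Fin (N + 1)),
    ⁅T.d r a, T.d m b⁆ = (m a : ℂ) • T.d (r + m) b - (r b : ℂ) • T.d (r + m) a
      + (μ * (m a : ℂ) * (r b : ℂ) + ν * (r a : ℂ) * (m b : ℂ)) •
          (∑ p : Fin (N + 1), (m p : ℂ) • T.k (r + m) p)

end Tor

end

end ToroidalPaper

namespace ToroidalPaper

noncomputable section

open scoped TensorProduct

attribute [local instance 100] LieRing.ofAssociativeRing

/-- the multi-index of t₀^j t^r, r ∈ ℤ^N -/
def mIdx {N : ℕ} (j : ℤ) (r : Fin N → ℤ) : Idx N := Fin.cons j r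

/-- the standard basis vector ε_p of ℤ^N -/
def eps {N : ℕ} (p : Fin N) : Fin N → ℤ := Pi.single p 1

/-- the top T₀ = ℂ[q₁^±,…,q_N^±] -/
def T0c (N : ℕ) : Type := (Fin N → ℤ) →₀ ℂ

instance {N : ℕ} : AddCommGroup (T0c N) :=
  inferInstanceAs (AddCommGroup ((Fin N → ℤ) →₀ ℂ))

instance {N : ℕ} : Module ℂ (T0c N) :=
  inferInstanceAs (Module ℂ ((Fin N → ℤ) →₀ ℂ))

/-- the monomial q^m ∈ T₀ -/
def bq {N : ℕ} (m : Fin N → ℤ) : T0c N :=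
  show ((Fin N → ℤ) →₀ ℂ) from Finsupp.single m 1

namespace Tor

variable {N : ℕ} {g : Type} [LieRing g] [LieAlgebra ℂ g] (T : Tor N g)

/-- t₀^j t^r d̃_p = t₀^j t^r d_p − ν r_p t₀^j t^r k₀ (p = 1,…,N) -/
def dT (ν : ℂ) (j : ℤ) (r : Fin N → ℤ) (p : Fin N) : T.G :=
  T.d (mIdx j r) p.succ - (ν * (r p : ℂ)) • T.k (mIdx j r) 0

/-- t₀^j t^r d̃₀ = −t₀^j t^r d₀ + (μ+ν)(j+1/2) t₀^j t^r k₀ -/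
def dT0 (μ ν : ℂ) (j : ℤ) (r : Fin N → ℤ) : T.G :=
  - T.d (mIdx j r) 0 + ((μ + ν) * ((j : ℂ) + 1 / 2)) • T.k (mIdx j r) 0

/-- the universal enveloping algebra U(g(μ,ν)) -/
abbrev U := UniversalEnvelopingAlgebra ℂ T.G

/-- the canonical embedding g(μ,ν) → U(g(μ,ν)) -/
def uι : T.G →ₗ⁅ℂ⁆ T.U := UniversalEnvelopingAlgebra.ι ℂ

/-- The spanning set of the subalgebra g^(+):  t₀^j t^r k₀ (j ≥ 1);
t₀^j t^r k_p, t₀^j t^r ⊗ g, t₀^j t^r d̃_p (j ≥ 0, 1 ≤ p ≤ N);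
t₀^j t^r d̃₀ (j ≥ -1). -/
def gPlusGen (μ ν : ℂ) : Set T.G :=
  {z | ∃ (j : ℤ) (r : Fin N → ℤ),
    (1 ≤ j ∧ z = T.k (mIdx j r) 0)
    ∨ (∃ p : Fin N, 0 ≤ j ∧ z = T.k (mIdx j r) p.succ)
    ∨ (∃ x : g, 0 ≤ j ∧ z = T.tg (mIdx j r) x)
    ∨ (∃ p : Fin N, 0 ≤ j ∧ z = T.dT ν j r p)
    ∨ (-1 ≤ j ∧ z = T.dT0 μ ν j r)}

/-- V_g = U(g) ⊗_{U(g^(+))} ℂ1, realized as the quotient of U(g) by the left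
ideal generated by g^(+). -/
def Vg (μ ν : ℂ) :=
  T.U ⧸ Submodule.span T.U ((⇑(T.uι)) '' T.gPlusGen μ ν)

instance (μ ν : ℂ) : AddCommGroup (T.Vg μ ν) :=
  inferInstanceAs (AddCommGroup (T.U ⧸ _))

instance (μ ν : ℂ) : Module T.U (T.Vg μ ν) :=
  inferInstanceAs (Module T.U (T.U ⧸ _))

instance (μ ν : ℂ) : Module ℂ (T.Vg μ ν) :=
  inferInstanceAs (Module ℂ (T.U ⧸ _))

instance (μ ν : ℂ) : IsScalarTower ℂ T.U (T.Vg μ ν) :=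
  inferInstanceAs (IsScalarTower ℂ T.U (T.U ⧸ _))

/-- the highest weight vector 1 ∈ V_g -/
def vac (μ ν : ℂ) : T.Vg μ ν := Submodule.Quotient.mk 1

/-- the set S = {k₀1 − c·1, (t^r k₀)(t^m k₀)1 − c (t^{r+m} k₀)1} -/
def Sset (μ ν c : ℂ) : Set (T.Vg μ ν) :=
  {w | w = T.uι (T.k (mIdx 0 0) 0) • T.vac μ ν - c • T.vac μ ν
    ∨ ∃ r m : Fin N → ℤ,
      w = T.uι (T.k (mIdx 0 r) 0) • (T.uι (T.k (mIdx 0 m) 0) • T.vac μ ν)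
        - c • (T.uι (T.k (mIdx 0 (r + m)) 0) • T.vac μ ν)}

/-- the g(μ,ν)-submodule R(S) of V_g generated by S -/
def RS (μ ν c : ℂ) : Submodule T.U (T.Vg μ ν) :=
  Submodule.span T.U (T.Sset μ ν c)

/-- V_g(c) = V_g / R(S) -/
def VgC (μ ν c : ℂ) := T.Vg μ ν ⧸ T.RS μ ν c

instance (μ ν c : ℂ) : AddCommGroup (T.VgC μ ν c) :=
  inferInstanceAs (AddCommGroup (T.Vg μ ν ⧸ _))

instance (μ ν c : ℂ) : Module T.U (T.VgC μ ν c) :=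
  inferInstanceAs (Module T.U (T.Vg μ ν ⧸ _))

instance (μ ν c : ℂ) : Module ℂ (T.VgC μ ν c) :=
  inferInstanceAs (Module ℂ (T.Vg μ ν ⧸ T.RS μ ν c))

instance (μ ν c : ℂ) : IsScalarTower ℂ T.U (T.VgC μ ν c) :=
  inferInstanceAs (IsScalarTower ℂ T.U (T.Vg μ ν ⧸ T.RS μ ν c))

/-- q^m = (1/c) (t^m k₀) 1 ∈ V_g(c) -/
def qm (μ ν c : ℂ) (m : Fin N → ℤ) : T.VgC μ ν c :=
  c⁻¹ • (Submodule.Quotient.mk (T.uι (T.k (mIdx 0 m) 0) • T.vac μ ν))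

/-- The defining relations of the generalized Verma module M(T₀):
for each generator x of the subalgebra g₀ ⊕ g₊ and each basis vector q^m of
T₀ = ℂ[q₁^±,…,q_N^±], the relator (u·x) ⊗ q^m − u ⊗ (x·q^m), where the action
of g₀ on T₀ is (t^m k₀)q^r = c q^{r+m}, (t^m k_p)q^r = 0, (t^m ⊗ g)q^r = 0,
(t^m d₀)q^r = ½(μ+ν)c q^{r+m}, (t^m d_p)q^r = (r_p + νc m_p) q^{r+m}, and g₊
acts trivially. -/
def RelT0 (μ ν c : ℂ) : Set (T.U ⊗[ℂ] T0c N) :=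
  {z | (∃ (u : T.U) (r m' : Fin N → ℤ),
        z = (u * T.uι (T.k (mIdx 0 r) 0)) ⊗ₜ[ℂ] bq m'
          - u ⊗ₜ[ℂ] (c • bq (m' + r)))
    ∨ (∃ (u : T.U) (j : ℤ) (r m' : Fin N → ℤ) (p : Fin (N + 1)), 1 ≤ j ∧
        z = (u * T.uι (T.k (mIdx j r) p)) ⊗ₜ[ℂ] bq m')
    ∨ (∃ (u : T.U) (r m' : Fin N → ℤ) (p : Fin N),
        z = (u * T.uι (T.k (mIdx 0 r) p.succ)) ⊗ₜ[ℂ] bq m')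
    ∨ (∃ (u : T.U) (j : ℤ) (r m' : Fin N → ℤ) (x : g), 0 ≤ j ∧
        z = (u * T.uι (T.tg (mIdx j r) x)) ⊗ₜ[ℂ] bq m')
    ∨ (∃ (u : T.U) (j : ℤ) (r m' : Fin N → ℤ) (p : Fin (N + 1)), 1 ≤ j ∧
        z = (u * T.uι (T.d (mIdx j r) p)) ⊗ₜ[ℂ] bq m')
    ∨ (∃ (u : T.U) (r m' : Fin N → ℤ),
        z = (u * T.uι (T.d (mIdx 0 r) 0)) ⊗ₜ[ℂ] bq m'
          - u ⊗ₜ[ℂ] (((μ + ν) * c / 2) • bq (m' + r)))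
    ∨ (∃ (u : T.U) (r m' : Fin N → ℤ) (s : Fin N),
        z = (u * T.uι (T.d (mIdx 0 r) s.succ)) ⊗ₜ[ℂ] bq m'
          - u ⊗ₜ[ℂ] (((m' s : ℂ) + ν * c * (r s : ℂ)) • bq (m' + r)))}

/-- the generalized Verma module M(T₀) -/
def MT0 (μ ν c : ℂ) := (T.U ⊗[ℂ] T0c N) ⧸ Submodule.span T.U (T.RelT0 μ ν c)

instance (μ ν c : ℂ) : AddCommGroup (T.MT0 μ ν c) :=
  inferInstanceAs (AddCommGroup ((T.U ⊗[ℂ] T0c N) ⧸ _))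

instance (μ ν c : ℂ) : Module T.U (T.MT0 μ ν c) :=
  inferInstanceAs (Module T.U ((T.U ⊗[ℂ] T0c N) ⧸ _))

instance (μ ν c : ℂ) : Module ℂ (T.MT0 μ ν c) :=
  inferInstanceAs
    (Module ℂ ((T.U ⊗[ℂ] T0c N) ⧸ Submodule.span T.U (T.RelT0 μ ν c)))

instance (μ ν c : ℂ) : IsScalarTower ℂ T.U (T.MT0 μ ν c) :=
  inferInstanceAs
    (IsScalarTower ℂ T.U ((T.U ⊗[ℂ] T0c N) ⧸ Submodule.span T.U (T.RelT0 μ ν c)))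

/-- the (unique) maximal proper submodule M^rad of M(T₀), realized as the sum
of all proper submodules -/
def Mrad (μ ν c : ℂ) : Submodule T.U (T.MT0 μ ν c) :=
  sSup {P : Submodule T.U (T.MT0 μ ν c) | P ≠ ⊤}

/-- L(T₀) = M(T₀)/M^rad, the irreducible quotient of M(T₀) -/
def LT0 (μ ν c : ℂ) := T.MT0 μ ν c ⧸ T.Mrad μ ν c

instance (μ ν c : ℂ) : AddCommGroup (T.LT0 μ ν c) :=
  inferInstanceAs (AddCommGroup (T.MT0 μ ν c ⧸ _))

instance (μ ν c : ℂ) : Module T.U (T.LT0 μ ν c) :=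
  inferInstanceAs (Module T.U (T.MT0 μ ν c ⧸ _))

instance (μ ν c : ℂ) : Module ℂ (T.LT0 μ ν c) :=
  inferInstanceAs (Module ℂ (T.MT0 μ ν c ⧸ T.Mrad μ ν c))

instance (μ ν c : ℂ) : IsScalarTower ℂ T.U (T.LT0 μ ν c) :=
  inferInstanceAs (IsScalarTower ℂ T.U (T.MT0 μ ν c ⧸ T.Mrad μ ν c))

/-- the image of q^m ∈ T₀ in L(T₀) -/
def qL (μ ν c : ℂ) (m : Fin N → ℤ) : T.LT0 μ ν c :=
  Submodule.Quotient.mk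
    (Submodule.Quotient.mk ((1 : T.U) ⊗ₜ[ℂ] bq m))

/-- the element E^m_{pa} = (t₀^{-1}t^{ε_p} d̃_a)q^{m−ε_p} − (t₀^{-1}d̃_a)q^m
+ (1/c) δ_{ap} (t₀^{-1}k_p)q^m of L(T₀) -/
def Em (μ ν c : ℂ) (m : Fin N → ℤ) (p a : Fin N) : T.LT0 μ ν c :=
  T.uι (T.dT ν (-1) (eps p) a) • T.qL μ ν c (m - eps p)
    - T.uι (T.dT ν (-1) 0 a) • T.qL μ ν c m
    + (if a = p then c⁻¹ else 0) • (T.uι (T.k (mIdx (-1) 0) p.succ) • T.qL μ ν c m)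

end Tor

end

end ToroidalPaper

namespace ToroidalPaper

noncomputable section AuxProof

attribute [local instance 100] LieRing.ofAssociativeRing

namespace Tor

variable {N : ℕ} {g : Type} [LieRing g] [LieAlgebra ℂ g] (T : Tor N g)

lemma mIdx_add (j j' : ℤ) (w w' : Fin N → ℤ) :
    mIdx j w + mIdx j' w' = mIdx (j + j') (w + w') := by
  funext p
  refine Fin.cases ?_ (fun q => ?_) p
  · simp [mIdx]
  · simp [mIdx]

lemma mIdx_self (ρ : Idx N) : mIdx (ρ 0) (Fin.tail ρ) = ρ :=
  Fin.cons_self_tail ρ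

lemma uι_swap (x y : T.G) :
    T.uι x * T.uι y = T.uι y * T.uι x + T.uι ⁅x, y⁆ := by
  rw [T.uι.map_lie, Ring.lie_def]
  abel

lemma uι_sum {ι : Type*} (s : Finset ι) (f : ι → T.G) :
    T.uι (∑ i ∈ s, f i) = ∑ i ∈ s, T.uι (f i) := by
  rw [← LieHom.coe_toLinearMap]
  exact map_sum T.uι.toLinearMap f s

variable (μ ν c : ℂ)

/-- image of the vacuum vector in V_g(c) -/
def vbar : T.VgC μ ν c := Submodule.Quotient.mk (T.vac μ ν)

lemma vbar_def : T.vbar μ ν c = Submodule.Quotient.mk (T.vac μ ν) := rfl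

lemma mkC_smul (u : T.U) (x : T.Vg μ ν) :
    (Submodule.Quotient.mk (u • x) : T.VgC μ ν c)
      = u • (Submodule.Quotient.mk x : T.VgC μ ν c) := rfl

lemma mkC_smulc (a : ℂ) (x : T.Vg μ ν) :
    (Submodule.Quotient.mk (a • x) : T.VgC μ ν c)
      = a • (Submodule.Quotient.mk x : T.VgC μ ν c) := rfl

lemma smulc (a : ℂ) (u : T.U) (x : T.VgC μ ν c) : u • a • x = a • u • x := by
  rw [← algebraMap_smul T.U a x, ← mul_smul, ← Algebra.commutes, mul_smul,
    algebraMap_smul]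

lemma kill {z : T.G} (hz : z ∈ T.gPlusGen μ ν) (u : T.U) :
    (u * T.uι z) • T.vbar μ ν c = 0 := by
  have hmem : u * T.uι z ∈ Submodule.span T.U ((⇑(T.uι)) '' T.gPlusGen μ ν) := by
    have h1 : T.uι z ∈ Submodule.span T.U ((⇑(T.uι)) '' T.gPlusGen μ ν) :=
      Submodule.subset_span ⟨z, hz, rfl⟩
    simpa [smul_eq_mul] using Submodule.smul_mem _ u h1
  have h1 : (u * T.uι z) • T.vac μ ν = 0 := by
    show (u * T.uι z) • (Submodule.Quotient.mk (1 : T.U) : T.Vg μ ν) = 0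
    rw [← Submodule.Quotient.mk_smul, smul_eq_mul, mul_one,
      Submodule.Quotient.mk_eq_zero]
    exact hmem
  show (Submodule.Quotient.mk ((u * T.uι z) • T.vac μ ν) : T.VgC μ ν c) = 0
  rw [h1]
  exact Submodule.Quotient.mk_zero _

lemma kill_k0 (u : T.U) (ρ : Idx N) (h : 1 ≤ ρ 0) :
    (u * T.uι (T.k ρ 0)) • T.vbar μ ν c = 0 :=
  T.kill μ ν c ⟨ρ 0, Fin.tail ρ, Or.inl ⟨h, by rw [mIdx_self]⟩⟩ u

lemma kill_kp (u : T.U) (ρ : Idx N) (p : Fin N) (h : 0 ≤ ρ 0) :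
    (u * T.uι (T.k ρ p.succ)) • T.vbar μ ν c = 0 :=
  T.kill μ ν c ⟨ρ 0, Fin.tail ρ, Or.inr (Or.inl ⟨p, h, by rw [mIdx_self]⟩)⟩ u

lemma kill_tg (u : T.U) (ρ : Idx N) (x : g) (h : 0 ≤ ρ 0) :
    (u * T.uι (T.tg ρ x)) • T.vbar μ ν c = 0 :=
  T.kill μ ν c ⟨ρ 0, Fin.tail ρ, Or.inr (Or.inr (Or.inl ⟨x, h, by rw [mIdx_self]⟩))⟩ u

lemma kill_dT (u : T.U) (j : ℤ) (w : Fin N → ℤ) (p : Fin N) (h : 0 ≤ j) :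
    (u * T.uι (T.dT ν j w p)) • T.vbar μ ν c = 0 :=
  T.kill μ ν c ⟨j, w, Or.inr (Or.inr (Or.inr (Or.inl ⟨p, h, rfl⟩)))⟩ u

lemma kill_dT0 (u : T.U) (j : ℤ) (w : Fin N → ℤ) (h : -1 ≤ j) :
    (u * T.uι (T.dT0 μ ν j w)) • T.vbar μ ν c = 0 :=
  T.kill μ ν c ⟨j, w, Or.inr (Or.inr (Or.inr (Or.inr ⟨h, rfl⟩)))⟩ u

lemma kill_d0 (u : T.U) (j : ℤ) (w : Fin N → ℤ) (h : 1 ≤ j) :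
    (u * T.uι (T.d (mIdx j w) 0)) • T.vbar μ ν c = 0 := by
  have hd : T.d (mIdx j w) 0
      = ((μ + ν) * ((j : ℂ) + 1 / 2)) • T.k (mIdx j w) 0 - T.dT0 μ ν j w := by
    rw [Tor.dT0]; abel
  rw [hd, map_sub, map_smul, mul_sub, mul_smul_comm, sub_smul,
    smul_assoc, T.kill_k0 μ ν c u (mIdx j w) (by simpa [mIdx] using h),
    T.kill_dT0 μ ν c u j w (by omega), smul_zero, sub_zero]

lemma kill_dp (u : T.U) (j : ℤ) (w : Fin N → ℤ) (p : Fin N) (h : 1 ≤ j) :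
    (u * T.uι (T.d (mIdx j w) p.succ)) • T.vbar μ ν c = 0 := by
  have hd : T.d (mIdx j w) p.succ
      = T.dT ν j w p + (ν * (w p : ℂ)) • T.k (mIdx j w) 0 := by
    rw [Tor.dT]; abel
  rw [hd, map_add, map_smul, mul_add, mul_smul_comm, add_smul,
    smul_assoc, T.kill_k0 μ ν c u (mIdx j w) (by simpa [mIdx] using h),
    T.kill_dT μ ν c u j w p (by omega), smul_zero, zero_add]

lemma kill_kSum (u : T.U) (ρ σ : Idx N) (h : 1 ≤ ρ 0 + σ 0) :
    (u * T.uι (T.kSum ρ σ)) • T.vbar μ ν c = 0 := by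
  rw [Tor.kSum, T.uι_sum, Finset.mul_sum, Finset.sum_smul]
  refine Finset.sum_eq_zero fun p _ => ?_
  rw [map_smul, mul_smul_comm, smul_assoc]
  refine Fin.cases ?_ (fun q => ?_) p
  · rw [T.kill_k0 μ ν c u (ρ + σ) (by simpa using h), smul_zero]
  · rw [T.kill_kp μ ν c u (ρ + σ) q (by simp only [Pi.add_apply]; omega), smul_zero]

lemma crel (r' m' : Fin N → ℤ) :
    (T.uι (T.k (mIdx 0 r') 0) * T.uι (T.k (mIdx 0 m') 0)) • T.vbar μ ν c
      = c • (T.uι (T.k (mIdx 0 (r' + m')) 0) • T.vbar μ ν c) := by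
  have hw : T.uι (T.k (mIdx 0 r') 0) • (T.uι (T.k (mIdx 0 m') 0) • T.vac μ ν)
      - c • (T.uι (T.k (mIdx 0 (r' + m')) 0) • T.vac μ ν) ∈ T.RS μ ν c :=
    Submodule.subset_span (Or.inr ⟨r', m', rfl⟩)
  have h0 := (Submodule.Quotient.mk_eq_zero _).mpr hw
  rw [Submodule.Quotient.mk_sub] at h0
  have h1 := sub_eq_zero.mp h0
  calc (T.uι (T.k (mIdx 0 r') 0) * T.uι (T.k (mIdx 0 m') 0)) • T.vbar μ ν c
      = (show T.VgC μ ν c from Submodule.Quotient.mk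
          (T.uι (T.k (mIdx 0 r') 0) • (T.uι (T.k (mIdx 0 m') 0) • T.vac μ ν))) := by
        rw [mul_smul]; rfl
    _ = (show T.VgC μ ν c from Submodule.Quotient.mk
          (c • (T.uι (T.k (mIdx 0 (r' + m')) 0) • T.vac μ ν))) := h1
    _ = c • (T.uι (T.k (mIdx 0 (r' + m')) 0) • T.vbar μ ν c) := by
        rfl

lemma qm_eq (w : Fin N → ℤ) :
    T.qm μ ν c w = c⁻¹ • (T.uι (T.k (mIdx 0 w) 0) • T.vbar μ ν c) := by
  rfl

lemma reduce (X Y : T.G) (w : Fin N → ℤ) :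
    T.uι X • (T.uι Y • T.qm μ ν c w)
      = c⁻¹ • ((T.uι X * T.uι Y * T.uι (T.k (mIdx 0 w) 0)) • T.vbar μ ν c) := by
  rw [T.qm_eq μ ν c w, T.smulc μ ν c, T.smulc μ ν c, ← mul_smul, ← mul_smul]

lemma triple (x y z : T.G) :
    (T.uι x * T.uι y * T.uι z) • T.vbar μ ν c
      = (T.uι y * T.uι z * T.uι x) • T.vbar μ ν c
        + (T.uι y * T.uι ⁅x, z⁆) • T.vbar μ ν c
        + (T.uι ⁅x, y⁆ * T.uι z) • T.vbar μ ν c := by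
  rw [T.uι_swap x y, add_mul, mul_assoc (T.uι y), T.uι_swap x z, mul_add,
    ← mul_assoc (T.uι y), add_smul, add_smul]

end Tor

end AuxProof

end ToroidalPaper


namespace ToroidalPaper

attribute [local instance 100] LieRing.ofAssociativeRing

/-- Lemma 4.5: identities in V_g(c). -/
theorem statement13 (N : ℕ) (hN : 1 ≤ N) (g : Type) [LieRing g] [LieAlgebra ℂ g]
    [FiniteDimensional ℂ g] [LieAlgebra.IsSimple ℂ g]
    (B : g →ₗ[ℂ] g →ₗ[ℂ] ℂ)
    (hBsymm : ∀ x y : g, B x y = B y x)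
    (hBnondeg : ∀ x : g, (∀ y : g, B x y = 0) → x = 0)
    (hBinv : ∀ x y z : g, B ⁅x, y⁆ z = B x ⁅y, z⁆)
    (μ ν : ℂ) (T : Tor N g) (hT : T.IsToroidal B μ ν)
    (c : ℂ) (hc : c ≠ 0) (m r s : Fin N → ℤ) (gx : g) (a b : Fin N) :
    -- (t₀t^s k₀)·(t₀^{-1}t^r k_a)·q^{m−r} = 0
    T.uι (T.k (mIdx 1 s) 0) • (T.uι (T.k (mIdx (-1) r) a.succ) • T.qm μ ν c (m - r)) = 0 ∧
    -- (t₀t^s k_b)·(t₀^{-1}t^r k_a)·q^{m−r} = 0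
    T.uι (T.k (mIdx 1 s) b.succ) • (T.uι (T.k (mIdx (-1) r) a.succ) • T.qm μ ν c (m - r)) = 0 ∧
    -- (t₀t^s⊗g)·(t₀^{-1}t^r k_a)·q^{m−r} = 0
    T.uι (T.tg (mIdx 1 s) gx) • (T.uι (T.k (mIdx (-1) r) a.succ) • T.qm μ ν c (m - r)) = 0 ∧
    -- (t₀t^s d̃₀)·(t₀^{-1}t^r k_a)·q^{m−r} = 0
    T.uι (T.dT0 μ ν 1 s) • (T.uι (T.k (mIdx (-1) r) a.succ) • T.qm μ ν c (m - r)) = 0 ∧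
    -- (t₀t^s d̃_b)·(t₀^{-1}t^r k_a)·q^{m−r} = c δ_{ab} q^{m+s}
    T.uι (T.dT ν 1 s b) • (T.uι (T.k (mIdx (-1) r) a.succ) • T.qm μ ν c (m - r)) =
      (if a = b then c else 0) • T.qm μ ν c (m + s) := by
  classical
  have htk : ∀ (ρ σ : Idx N) (p : Fin (N + 1)) (x : g), ⁅T.tg ρ x, T.k σ p⁆ = 0 := by
    intro ρ σ p x
    rw [← lie_skew, hT.br_kg, neg_zero]
  have hAQ1 : (1 : ℤ) ≤ (mIdx (1 : ℤ) s) 0 := by norm_num [mIdx]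
  have key0 : ∀ X : T.G, ⁅X, T.k (mIdx (-1) r) a.succ⁆ = 0 →
      ⁅X, T.k (mIdx 0 (m - r)) 0⁆ = 0 →
      ((T.uι (T.k (mIdx (-1) r) a.succ) * T.uι (T.k (mIdx 0 (m - r)) 0) * T.uι X)
          • T.vbar μ ν c = 0) →
      T.uι X • (T.uι (T.k (mIdx (-1) r) a.succ) • T.qm μ ν c (m - r)) = 0 := by
    intro X h1 h2 h3
    rw [T.reduce μ ν c, T.triple μ ν c, h1, h2, map_zero, mul_zero,
      zero_mul, zero_smul, add_zero, add_zero, h3, smul_zero]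
  have hK1 : (T.uι (T.k (mIdx (-1) r) a.succ) * T.uι (T.k (mIdx 0 (m - r)) 0)
      * T.uι (T.k (mIdx 1 s) 0)) • T.vbar μ ν c = 0 :=
    T.kill_k0 μ ν c _ (mIdx 1 s) hAQ1
  have hkra : (T.uι (T.k (mIdx 0 (s + r)) a.succ)
      * T.uι (T.k (mIdx 0 (m - r)) 0)) • T.vbar μ ν c = 0 := by
    rw [T.uι_swap, hT.br_kk, map_zero, add_zero,
      T.kill_kp μ ν c _ (mIdx 0 (s + r)) a (by norm_num [mIdx])]
  have hK1' : (T.uι (T.k (mIdx 1 s) 0) * T.uι (T.k (mIdx (-1) r) a.succ)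
      * T.uι (T.k (mIdx 0 (m - r)) 0)) • T.vbar μ ν c = 0 := by
    rw [T.triple μ ν c, hT.br_kk, hT.br_kk, map_zero, mul_zero, zero_mul,
      zero_smul, add_zero, add_zero, hK1]
  refine ⟨?_, ?_, ?_, ?_, ?_⟩
  · exact key0 _ (hT.br_kk _ _ _ _) (hT.br_kk _ _ _ _) hK1
  · exact key0 _ (hT.br_kk _ _ _ _) (hT.br_kk _ _ _ _)
      (T.kill_kp μ ν c _ (mIdx 1 s) b (by norm_num [mIdx]))
  · exact key0 _ (htk _ _ _ _) (htk _ _ _ _)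
      (T.kill_tg μ ν c _ (mIdx 1 s) gx (by norm_num [mIdx]))
  · -- the d̃₀ case
    have hbr : ⁅T.d (mIdx 1 s) 0, T.k (mIdx (-1) r) a.succ⁆
        = -T.k (mIdx 0 (s + r)) a.succ := by
      rw [hT.br_dk, Tor.mIdx_add]
      norm_num [mIdx, Ne.symm (Fin.succ_ne_zero a)]
    have hbr2 : ⁅T.d (mIdx 1 s) 0, T.k (mIdx 0 (m - r)) 0⁆
        = T.kSum (mIdx 1 s) (mIdx 0 (m - r)) := by
      rw [hT.br_dk]
      norm_num [mIdx]
    have hD0 : (T.uι (T.d (mIdx 1 s) 0) * T.uι (T.k (mIdx (-1) r) a.succ)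
        * T.uι (T.k (mIdx 0 (m - r)) 0)) • T.vbar μ ν c = 0 := by
      rw [T.triple μ ν c, hbr, hbr2,
        T.kill_d0 μ ν c _ 1 s le_rfl,
        T.kill_kSum μ ν c _ (mIdx 1 s) (mIdx 0 (m - r)) (by norm_num [mIdx]),
        map_neg, neg_mul, neg_smul, hkra, neg_zero, add_zero, add_zero]
    have hXexp : T.uι (T.dT0 μ ν 1 s)
        = -T.uι (T.d (mIdx 1 s) 0)
          + ((μ + ν) * (((1 : ℤ) : ℂ) + 1 / 2)) • T.uι (T.k (mIdx 1 s) 0) := by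
      rw [Tor.dT0, map_add, map_neg, map_smul]
    rw [T.reduce μ ν c, hXexp, add_mul, add_mul, neg_mul, neg_mul,
      smul_mul_assoc, smul_mul_assoc, add_smul, neg_smul, smul_assoc,
      hD0, hK1', smul_zero, neg_zero, add_zero, smul_zero]
  · -- the d̃_b case
    have hbrDQ : ⁅T.d (mIdx 1 s) b.succ, T.k (mIdx 0 (m - r)) 0⁆
        = (((m - r) b : ℤ) : ℂ) • T.k (mIdx 1 (s + (m - r))) 0 := by
      rw [hT.br_dk, Tor.mIdx_add]
      norm_num [mIdx, Fin.succ_ne_zero b]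
    have hbrDA : ⁅T.d (mIdx 1 s) b.succ, T.k (mIdx (-1) r) a.succ⁆
        = ((r b : ℤ) : ℂ) • T.k (mIdx 0 (s + r)) a.succ
          + (if b = a then (1 : ℂ) else 0) • T.kSum (mIdx 1 s) (mIdx (-1) r) := by
      rw [hT.br_dk, Tor.mIdx_add]
      norm_num [mIdx, Fin.succ_inj]
    have hS : (T.uι (T.kSum (mIdx 1 s) (mIdx (-1) r))
        * T.uι (T.k (mIdx 0 (m - r)) 0)) • T.vbar μ ν c
        = c • (T.uι (T.k (mIdx 0 (m + s)) 0) • T.vbar μ ν c) := by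
      have hkz : T.kSum (mIdx 1 s) (mIdx (-1) r)
          = T.k (mIdx 0 (s + r)) 0
            + ∑ q : Fin N, (s q : ℂ) • T.k (mIdx 0 (s + r)) q.succ := by
        rw [Tor.kSum, Tor.mIdx_add, Fin.sum_univ_succ]
        norm_num [mIdx]
      rw [hkz, map_add, T.uι_sum, add_mul, Finset.sum_mul, add_smul,
        Finset.sum_smul, T.crel μ ν c (s + r) (m - r)]
      rw [Finset.sum_eq_zero (fun q _ => ?_), add_zero]
      · have hmr : s + r + (m - r) = m + s := by abel
        rw [hmr]
      · rw [map_smul, smul_mul_assoc, smul_assoc, T.uι_swap, hT.br_kk,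
          map_zero, add_zero,
          T.kill_kp μ ν c _ (mIdx 0 (s + r)) q (by norm_num [mIdx]), smul_zero]
    have hD : (T.uι (T.d (mIdx 1 s) b.succ) * T.uι (T.k (mIdx (-1) r) a.succ)
        * T.uι (T.k (mIdx 0 (m - r)) 0)) • T.vbar μ ν c
        = (if b = a then (1 : ℂ) else 0)
            • (c • (T.uι (T.k (mIdx 0 (m + s)) 0) • T.vbar μ ν c)) := by
      rw [T.triple μ ν c, hbrDQ, hbrDA,
        T.kill_dp μ ν c _ 1 s b le_rfl,
        map_smul, mul_smul_comm, smul_assoc,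
        T.kill_k0 μ ν c _ (mIdx 1 (s + (m - r))) (by norm_num [mIdx]), smul_zero,
        map_add, map_smul, map_smul, add_mul,
        smul_mul_assoc, smul_mul_assoc, add_smul, smul_assoc, smul_assoc,
        hkra, smul_zero, hS, zero_add, zero_add, zero_add]
    have hXe : T.uι (T.dT ν 1 s b) = T.uι (T.d (mIdx 1 s) b.succ)
        - (ν * (s b : ℂ)) • T.uι (T.k (mIdx 1 s) 0) := by
      rw [Tor.dT, map_sub, map_smul]
    rw [T.reduce μ ν c, hXe, sub_mul, sub_mul, smul_mul_assoc, smul_mul_assoc,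
      sub_smul, smul_assoc, hD, hK1', smul_zero, sub_zero,
      T.qm_eq μ ν c (m + s)]
    simp only [smul_smul]
    congr 1
    rcases eq_or_ne a b with h | h
    · subst h
      simp only [if_pos rfl, ↓reduceIte]
      field_simp
    · simp [h, Ne.symm h]


end ToroidalPaper
end

section
/- Let μ, ν ∈ ℂ, c ≠ 0 and r, m ∈ ℤ^N. In the irreducible module L(T₀) the following identity holds: (t₀^{-1}t^r d̃₀)·q^m = (1/c) Σ_{p=1}^N m_p (t₀^{-1}k_p)·q^{r+m}. -/
namespace ToroidalPaper

noncomputable section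

open scoped TensorProduct

attribute [local instance 100] LieRing.ofAssociativeRing

end

end ToroidalPaper

namespace ToroidalPaper

attribute [local instance 100] LieRing.ofAssociativeRing

noncomputable section Aux

open Tor

set_option maxHeartbeats 1000000

variable {N : ℕ} {g : Type} [LieRing g] [LieAlgebra ℂ g]

lemma mIdx_def (j : ℤ) (r : Fin N → ℤ) : mIdx j r = Fin.cons j r := rfl

lemma mIdx_apply_zero (j : ℤ) (r : Fin N → ℤ) : mIdx j r 0 = j := by
  simp [mIdx]

lemma mIdx_apply_succ (j : ℤ) (r : Fin N → ℤ) (p : Fin N) : mIdx j r p.succ = r p := by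
  simp [mIdx]

lemma mIdx_add (j j' : ℤ) (r r' : Fin N → ℤ) :
    mIdx j r + mIdx j' r' = mIdx (j + j') (r + r') := by
  funext i
  refine Fin.cases ?_ (fun q => ?_) i <;> simp [mIdx]

variable (T : Tor N g) (μ ν c : ℂ)

/-- the class of `1 ⊗ q^m` in `M(T₀)` -/
def wv (m' : Fin N → ℤ) : T.MT0 μ ν c :=
  Submodule.Quotient.mk ((1 : T.U) ⊗ₜ[ℂ] bq m')

lemma smul_wv_eq (y : T.U) (m' : Fin N → ℤ) :
    y • wv T μ ν c m' = Submodule.Quotient.mk (y ⊗ₜ[ℂ] bq m') := by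
  rw [wv]; erw [← Submodule.Quotient.mk_smul]; rw [TensorProduct.smul_tmul', smul_eq_mul, mul_one]

lemma rel_k0 (rr m' : Fin N → ℤ) :
    T.uι (T.k (mIdx 0 rr) 0) • wv T μ ν c m' = c • wv T μ ν c (m' + rr) := by
  rw [smul_wv_eq, wv]; erw [← Submodule.Quotient.mk_smul]; rw [← TensorProduct.tmul_smul]
  erw [Submodule.Quotient.eq]
  exact Submodule.subset_span (Or.inl ⟨1, rr, m', by rw [one_mul]⟩)

lemma rel_kj (j : ℤ) (hj : 1 ≤ j) (rr : Fin N → ℤ) (p : Fin (N + 1)) (m' : Fin N → ℤ) :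
    T.uι (T.k (mIdx j rr) p) • wv T μ ν c m' = 0 := by
  rw [smul_wv_eq]; erw [Submodule.Quotient.mk_eq_zero]
  exact Submodule.subset_span (Or.inr (Or.inl ⟨1, j, rr, m', p, hj, by rw [one_mul]⟩))

lemma rel_kp (rr : Fin N → ℤ) (p : Fin N) (m' : Fin N → ℤ) :
    T.uι (T.k (mIdx 0 rr) p.succ) • wv T μ ν c m' = 0 := by
  rw [smul_wv_eq]; erw [Submodule.Quotient.mk_eq_zero]
  exact Submodule.subset_span (Or.inr (Or.inr (Or.inl ⟨1, rr, m', p, by rw [one_mul]⟩)))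

lemma rel_tg (j : ℤ) (hj : 0 ≤ j) (rr : Fin N → ℤ) (x : g) (m' : Fin N → ℤ) :
    T.uι (T.tg (mIdx j rr) x) • wv T μ ν c m' = 0 := by
  rw [smul_wv_eq]; erw [Submodule.Quotient.mk_eq_zero]
  exact Submodule.subset_span
    (Or.inr (Or.inr (Or.inr (Or.inl ⟨1, j, rr, m', x, hj, by rw [one_mul]⟩))))

lemma rel_dj (j : ℤ) (hj : 1 ≤ j) (rr : Fin N → ℤ) (p : Fin (N + 1)) (m' : Fin N → ℤ) :
    T.uι (T.d (mIdx j rr) p) • wv T μ ν c m' = 0 := by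
  rw [smul_wv_eq]; erw [Submodule.Quotient.mk_eq_zero]
  exact Submodule.subset_span
    (Or.inr (Or.inr (Or.inr (Or.inr (Or.inl ⟨1, j, rr, m', p, hj, by rw [one_mul]⟩)))))

lemma rel_d0 (rr m' : Fin N → ℤ) :
    T.uι (T.d (mIdx 0 rr) 0) • wv T μ ν c m'
      = ((μ + ν) * c / 2) • wv T μ ν c (m' + rr) := by
  rw [smul_wv_eq, wv]; erw [← Submodule.Quotient.mk_smul]; rw [← TensorProduct.tmul_smul]
  erw [Submodule.Quotient.eq]
  exact Submodule.subset_span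
    (Or.inr (Or.inr (Or.inr (Or.inr (Or.inr (Or.inl ⟨1, rr, m', by rw [one_mul]⟩))))))

lemma rel_dp (rr : Fin N → ℤ) (s : Fin N) (m' : Fin N → ℤ) :
    T.uι (T.d (mIdx 0 rr) s.succ) • wv T μ ν c m'
      = ((m' s : ℂ) + ν * c * (rr s : ℂ)) • wv T μ ν c (m' + rr) := by
  rw [smul_wv_eq, wv]; erw [← Submodule.Quotient.mk_smul]; rw [← TensorProduct.tmul_smul]
  erw [Submodule.Quotient.eq]
  exact Submodule.subset_span
    (Or.inr (Or.inr (Or.inr (Or.inr (Or.inr (Or.inr ⟨1, rr, m', s, by rw [one_mul]⟩))))))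

lemma smul_smul_lie (x y : T.G) (v : T.MT0 μ ν c) :
    T.uι x • T.uι y • v = T.uι y • T.uι x • v + T.uι ⁅x, y⁆ • v := by
  rw [← mul_smul, ← mul_smul, ← add_smul, LieHom.map_lie, Ring.lie_def]
  congr 1
  abel

/-- homogeneous generators of degree `d` -/
def GenSet (d : ℤ) : Set T.G :=
  {y | ∃ ρ : Idx N, ρ 0 = d ∧
    ((∃ x : g, y = T.tg ρ x) ∨ (∃ p, y = T.k ρ p) ∨ (∃ p, y = T.d ρ p))}

/-- the homogeneous component of degree `d` (as spanned by generators) -/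
def HomD (d : ℤ) : Submodule ℂ T.G :=
  Submodule.span ℂ (GenSet T d)

lemma tg_mem' (ρ : Idx N) (x : g) {d : ℤ} (h : ρ 0 = d) : T.tg ρ x ∈ HomD T d :=
  h ▸ Submodule.subset_span ⟨ρ, rfl, Or.inl ⟨x, rfl⟩⟩

lemma k_mem' (ρ : Idx N) (p : Fin (N + 1)) {d : ℤ} (h : ρ 0 = d) : T.k ρ p ∈ HomD T d :=
  h ▸ Submodule.subset_span ⟨ρ, rfl, Or.inr (Or.inl ⟨p, rfl⟩)⟩

lemma d_mem' (ρ : Idx N) (p : Fin (N + 1)) {d : ℤ} (h : ρ 0 = d) : T.d ρ p ∈ HomD T d :=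
  h ▸ Submodule.subset_span ⟨ρ, rfl, Or.inr (Or.inr ⟨p, rfl⟩)⟩

lemma kSum_mem (ρ σ : Idx N) {d : ℤ} (h : ρ 0 + σ 0 = d) : T.kSum ρ σ ∈ HomD T d :=
  Submodule.sum_mem _ fun p _ => Submodule.smul_mem _ _ (k_mem' T _ p h)

variable {B : g →ₗ[ℂ] g →ₗ[ℂ] ℂ}

lemma lie_gen_mem (hT : T.IsToroidal B μ ν) {d e : ℤ} {x y : T.G}
    (hx : x ∈ GenSet T d) (hy : y ∈ GenSet T e) : ⁅x, y⁆ ∈ HomD T (d + e) := by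
  obtain ⟨ρ, rfl, hx⟩ := hx
  obtain ⟨σ, rfl, hy⟩ := hy
  have h1 : (ρ + σ) 0 = ρ 0 + σ 0 := rfl
  have h2 : (σ + ρ) 0 = ρ 0 + σ 0 := add_comm (σ 0) (ρ 0)
  rcases hx with ⟨a, rfl⟩ | ⟨p, rfl⟩ | ⟨p, rfl⟩ <;>
    rcases hy with ⟨b, rfl⟩ | ⟨q, rfl⟩ | ⟨q, rfl⟩
  · rw [hT.br_gg]
    exact add_mem (tg_mem' T _ _ h1) (Submodule.smul_mem _ _ (kSum_mem T _ _ rfl))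
  · rw [← lie_skew, hT.br_kg, neg_zero]
    exact zero_mem _
  · rw [← lie_skew, hT.br_dg]
    exact neg_mem (Submodule.smul_mem _ _ (tg_mem' T _ _ h2))
  · rw [hT.br_kg]
    exact zero_mem _
  · rw [hT.br_kk]
    exact zero_mem _
  · rw [← lie_skew, hT.br_dk]
    exact neg_mem (add_mem (Submodule.smul_mem _ _ (k_mem' T _ _ h2))
      (Submodule.smul_mem _ _ (kSum_mem T _ _ (add_comm _ _))))
  · rw [hT.br_dg]
    exact Submodule.smul_mem _ _ (tg_mem' T _ _ h1)
  · rw [hT.br_dk]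
    exact add_mem (Submodule.smul_mem _ _ (k_mem' T _ _ h1))
      (Submodule.smul_mem _ _ (kSum_mem T _ _ rfl))
  · rw [hT.br_dd]
    exact add_mem (sub_mem (Submodule.smul_mem _ _ (d_mem' T _ _ h1))
        (Submodule.smul_mem _ _ (d_mem' T _ _ h1)))
      (Submodule.smul_mem _ _ (Submodule.sum_mem _ fun p _ =>
        Submodule.smul_mem _ _ (k_mem' T _ p h1)))

lemma lie_mem_right (hT : T.IsToroidal B μ ν) {d e : ℤ} {x : T.G}
    (hx : x ∈ GenSet T d) {y : T.G} (hy : y ∈ HomD T e) : ⁅x, y⁆ ∈ HomD T (d + e) := by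
  induction hy using Submodule.span_induction with
  | mem z hz => exact lie_gen_mem T μ ν hT hx hz
  | zero => rw [lie_zero]; exact zero_mem _
  | add a b _ _ ha hb => rw [lie_add]; exact add_mem ha hb
  | smul t a _ ha => rw [lie_smul]; exact Submodule.smul_mem _ _ ha

lemma lie_mem (hT : T.IsToroidal B μ ν) {d e : ℤ} {x y : T.G}
    (hx : x ∈ HomD T d) (hy : y ∈ HomD T e) : ⁅x, y⁆ ∈ HomD T (d + e) := by
  induction hx using Submodule.span_induction with
  | mem z hz => exact lie_mem_right T μ ν hT hz hy
  | zero => rw [zero_lie]; exact zero_mem _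
  | add a b _ _ ha hb => rw [add_lie]; exact add_mem ha hb
  | smul t a _ ha => rw [smul_lie]; exact Submodule.smul_mem _ _ ha

/-- all homogeneous generators -/
def AllGen : Set T.G := {y | ∃ d : ℤ, y ∈ GenSet T d}

lemma omega_comp_span (F : OmegaR N →ₗ[ℂ] T.G)
    (hF : ∀ (ρ : Idx N) (p : Fin (N + 1)),
      F (Finsupp.single ρ (Pi.single p 1)) ∈ Submodule.span ℂ (AllGen T))
    (f : OmegaR N) : F f ∈ Submodule.span ℂ (AllGen T) := by
  induction f using Finsupp.induction with
  | zero => rw [map_zero]; exact zero_mem _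
  | single_add ρ v f _ _ ih =>
    rw [map_add]
    refine add_mem ?_ ih
    have hv : Finsupp.single ρ v
        = ∑ p : Fin (N + 1), (v p) • Finsupp.single ρ (Pi.single p (1 : ℂ)) := by
      calc Finsupp.single ρ v
          = Finsupp.singleAddHom ρ (∑ p : Fin (N + 1), Pi.single p (v p)) := by
            rw [Finset.univ_sum_single]
            rfl
        _ = ∑ p : Fin (N + 1), Finsupp.singleAddHom ρ (Pi.single p (v p)) :=
            map_sum _ _ _
        _ = ∑ p : Fin (N + 1), (v p) • Finsupp.single ρ (Pi.single p (1 : ℂ)) := by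
            refine Finset.sum_congr rfl fun p _ => ?_
            rw [Finsupp.singleAddHom_apply, Finsupp.smul_single, ← Pi.single_smul,
              smul_eq_mul, mul_one]
    rw [hv, map_sum]
    exact Submodule.sum_mem _ fun p _ => by
      rw [map_smul]; exact Submodule.smul_mem _ _ (hF ρ p)

lemma acomp_span (a : Idx N →₀ g) :
    T.e.symm ((a, 0, 0) : Carrier N g) ∈ Submodule.span ℂ (AllGen T) := by
  induction a using Finsupp.induction with
  | zero =>
    rw [show (((0 : Idx N →₀ g), (0 : Kmod N), (0 : Idx N →₀ (Fin (N + 1) → ℂ)))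
      : Carrier N g) = 0 from rfl, map_zero]
    exact zero_mem _
  | single_add ρ x0 f' _ _ ih =>
    have h : ((Finsupp.single ρ x0 + f', 0, 0) : Carrier N g)
        = ((Finsupp.single ρ x0, 0, 0) : Carrier N g) + ((f', 0, 0) : Carrier N g) := by
      simp [Prod.ext_iff]
    rw [h, map_add]
    exact add_mem (Submodule.subset_span ⟨ρ 0, ρ, rfl, Or.inl ⟨x0, rfl⟩⟩) ih

lemma kcomp_span (b : Kmod N) :
    T.e.symm ((0, b, 0) : Carrier N g) ∈ Submodule.span ℂ (AllGen T) := by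
  obtain ⟨f', rfl⟩ := Submodule.Quotient.mk_surjective (dR N) b
  let F : OmegaR N →ₗ[ℂ] T.G :=
    T.e.symm.toLinearMap ∘ₗ (LinearMap.inr ℂ (Idx N →₀ g) (Kmod N × (Idx N →₀ (Fin (N + 1) → ℂ)))) ∘ₗ
      (LinearMap.inl ℂ (Kmod N) (Idx N →₀ (Fin (N + 1) → ℂ))) ∘ₗ (dR N).mkQ
  have h : T.e.symm ((0, Submodule.Quotient.mk f', 0) : Carrier N g) = F f' := rfl
  rw [h]
  exact omega_comp_span T F
    (fun ρ p => Submodule.subset_span ⟨ρ 0, ρ, rfl, Or.inr (Or.inl ⟨p, rfl⟩)⟩) f'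

lemma dcomp_span (f : Idx N →₀ (Fin (N + 1) → ℂ)) :
    T.e.symm ((0, 0, f) : Carrier N g) ∈ Submodule.span ℂ (AllGen T) := by
  let F : OmegaR N →ₗ[ℂ] T.G :=
    T.e.symm.toLinearMap ∘ₗ (LinearMap.inr ℂ (Idx N →₀ g) (Kmod N × (Idx N →₀ (Fin (N + 1) → ℂ)))) ∘ₗ
      (LinearMap.inr ℂ (Kmod N) (Idx N →₀ (Fin (N + 1) → ℂ)))
  have h : T.e.symm ((0, 0, f) : Carrier N g) = F f := rfl
  rw [h]
  exact omega_comp_span T F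
    (fun ρ p => Submodule.subset_span ⟨ρ 0, ρ, rfl, Or.inr (Or.inr ⟨p, rfl⟩)⟩) f

lemma mem_span_allGen (x : T.G) : x ∈ Submodule.span ℂ (AllGen T) := by
  rw [← T.e.symm_apply_apply x]
  generalize T.e x = w
  obtain ⟨a, b, f⟩ := w
  have hdec : ((a, b, f) : Carrier N g)
      = ((a, 0, 0) : Carrier N g) + ((0, b, 0) : Carrier N g) + ((0, 0, f) : Carrier N g) := by
    simp [Prod.ext_iff]
  rw [hdec, map_add, map_add]
  exact add_mem (add_mem (acomp_span T a) (kcomp_span T b)) (dcomp_span T f)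

/-- monomials in the images of homogeneous elements -/
def MonSet : Set T.U :=
  {u | ∃ L : List (ℤ × T.G),
    (∀ pr ∈ L, pr.2 ∈ HomD T pr.1) ∧ u = (L.map fun pr => T.uι pr.2).prod}

lemma monset_mul {u v : T.U} (hu : u ∈ MonSet T) (hv : v ∈ MonSet T) :
    u * v ∈ MonSet T := by
  obtain ⟨L1, h1, rfl⟩ := hu
  obtain ⟨L2, h2, rfl⟩ := hv
  exact ⟨L1 ++ L2, fun pr hpr => (List.mem_append.mp hpr).elim (h1 pr) (h2 pr),
    by rw [List.map_append, List.prod_append]⟩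

lemma mul_mem_span_monset {u v : T.U} (hu : u ∈ Submodule.span ℂ (MonSet T))
    (hv : v ∈ Submodule.span ℂ (MonSet T)) : u * v ∈ Submodule.span ℂ (MonSet T) := by
  induction hu using Submodule.span_induction with
  | mem a ha =>
    induction hv using Submodule.span_induction with
    | mem b hb => exact Submodule.subset_span (monset_mul T ha hb)
    | zero => rw [mul_zero]; exact zero_mem _
    | add b1 b2 _ _ hb1 hb2 => rw [mul_add]; exact add_mem hb1 hb2
    | smul t b _ hb => rw [mul_smul_comm]; exact Submodule.smul_mem _ _ hb
  | zero => rw [zero_mul]; exact zero_mem _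
  | add a1 a2 _ _ ha1 ha2 => rw [add_mul]; exact add_mem ha1 ha2
  | smul t a _ ha => rw [smul_mul_assoc]; exact Submodule.smul_mem _ _ ha

lemma uι_mem_span_monset (x : T.G) : T.uι x ∈ Submodule.span ℂ (MonSet T) := by
  have hx := mem_span_allGen T x
  induction hx using Submodule.span_induction with
  | mem y hy =>
    obtain ⟨d, hyd⟩ := hy
    refine Submodule.subset_span ⟨[(d, y)], ?_, by simp⟩
    intro pr hpr
    rcases List.mem_singleton.mp hpr with rfl
    exact Submodule.subset_span hyd
  | zero => rw [map_zero T.uι]; exact zero_mem _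
  | add a b _ _ ha hb => rw [map_add T.uι]; exact add_mem ha hb
  | smul t a _ ha => rw [map_smul T.uι]; exact Submodule.smul_mem _ _ ha

lemma mem_span_monset (u : T.U) : u ∈ Submodule.span ℂ (MonSet T) := by
  obtain ⟨t, rfl⟩ := RingCon.mkₐ_surjective (α := ℂ) (UniversalEnvelopingAlgebra.ringCon ℂ T.G) u
  induction t using TensorAlgebra.induction with
  | algebraMap r =>
    rw [AlgHom.commutes, Algebra.algebraMap_eq_smul_one]
    exact Submodule.smul_mem _ _ (Submodule.subset_span ⟨[], by simp, by simp; rfl⟩)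
  | ι x =>
    exact uι_mem_span_monset T x
  | mul a b ha hb => rw [map_mul]; exact mul_mem_span_monset T ha hb
  | add a b ha hb => rw [map_add]; exact add_mem ha hb

/-- the degree operator `t₀ d₀` acting on `M(T₀)` -/
def Dop : Module.End ℂ (T.MT0 μ ν c) where
  toFun v := T.uι (T.d (mIdx 0 0) 0) • v
  map_add' _ _ := smul_add _ _ _
  map_smul' a v := (smul_comm a _ v).symm

lemma lie_D_gen (hT : T.IsToroidal B μ ν) {d : ℤ} {y : T.G} (hy : y ∈ GenSet T d) :
    ⁅T.d (mIdx 0 0) 0, y⁆ = (d : ℂ) • y := by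
  have hz : ∀ p : Fin (N + 1), (mIdx (0 : ℤ) (0 : Fin N → ℤ)) p = 0 := fun p => by
    refine Fin.cases ?_ (fun q => ?_) p <;> simp [mIdx]
  have hzero : ∀ ρ : Idx N, mIdx (0 : ℤ) (0 : Fin N → ℤ) + ρ = ρ := fun ρ => by
    funext i
    rw [Pi.add_apply, hz, zero_add]
  obtain ⟨ρ, rfl, hy⟩ := hy
  rcases hy with ⟨x, rfl⟩ | ⟨p, rfl⟩ | ⟨p, rfl⟩
  · rw [hT.br_dg, hzero]
  · rw [hT.br_dk, hzero, Tor.kSum]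
    rw [Finset.sum_eq_zero fun q _ => by rw [hz, Int.cast_zero, zero_smul]]
    rw [smul_zero, add_zero]
  · rw [hT.br_dd, hzero, hz, hz]
    simp

lemma lie_D (hT : T.IsToroidal B μ ν) {d : ℤ} {x : T.G} (hx : x ∈ HomD T d) :
    ⁅T.d (mIdx 0 0) 0, x⁆ = (d : ℂ) • x := by
  induction hx using Submodule.span_induction with
  | mem y hy => exact lie_D_gen T μ ν hT hy
  | zero => rw [lie_zero, smul_zero]
  | add a b _ _ ha hb => rw [lie_add, ha, hb, smul_add]
  | smul t a _ ha => rw [lie_smul, ha, smul_comm]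

lemma eigen_w (m' : Fin N → ℤ) :
    wv T μ ν c m' ∈ Module.End.eigenspace (Dop T μ ν c) ((μ + ν) * c / 2) := by
  rw [Module.End.mem_eigenspace_iff]
  show T.uι (T.d (mIdx 0 0) 0) • wv T μ ν c m' = _
  rw [rel_d0, add_zero]

lemma eigen_smul (hT : T.IsToroidal B μ ν) {θ : ℂ} {v : T.MT0 μ ν c}
    (hv : v ∈ Module.End.eigenspace (Dop T μ ν c) θ)
    {d : ℤ} {x : T.G} (hx : x ∈ HomD T d) :
    T.uι x • v ∈ Module.End.eigenspace (Dop T μ ν c) (θ + (d : ℂ)) := by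
  rw [Module.End.mem_eigenspace_iff] at hv ⊢
  have hv' : T.uι (T.d (mIdx 0 0) 0) • v = θ • v := hv
  show T.uι (T.d (mIdx 0 0) 0) • T.uι x • v = _
  rw [smul_smul_lie, hv', lie_D T μ ν hT hx, map_smul T.uι, smul_assoc, add_smul]
  rw [smul_comm θ (T.uι x) v]

lemma eigen_prod (hT : T.IsToroidal B μ ν) {θ : ℂ} {v : T.MT0 μ ν c}
    (hv : v ∈ Module.End.eigenspace (Dop T μ ν c) θ) :
    ∀ (L : List (ℤ × T.G)), (∀ pr ∈ L, pr.2 ∈ HomD T pr.1) →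
      ((L.map fun pr => T.uι pr.2).prod) • v
        ∈ Module.End.eigenspace (Dop T μ ν c) (θ + (((L.map Prod.fst).sum : ℤ) : ℂ)) := by
  intro L
  induction L with
  | nil => intro _; simpa using hv
  | cons pr L' ih =>
    intro hmem
    simp only [List.map_cons, List.prod_cons, List.sum_cons, mul_smul]
    have h1 := ih fun q hq => hmem q (List.mem_cons_of_mem _ hq)
    have h2 := eigen_smul T μ ν c hT h1 (hmem pr (List.mem_cons_self))
    have heq : θ + ((pr.1 + (L'.map Prod.fst).sum : ℤ) : ℂ)
        = θ + (((L'.map Prod.fst).sum : ℤ) : ℂ) + (pr.1 : ℂ) := by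
      push_cast
      ring
    rw [heq]
    exact h2

/-- the singular vector -/
def Zel (m r : Fin N → ℤ) : T.MT0 μ ν c :=
  T.uι (T.dT0 μ ν (-1) r) • wv T μ ν c m
    - c⁻¹ • ∑ p : Fin N, (m p : ℂ) •
        (T.uι (T.k (mIdx (-1) 0) p.succ) • wv T μ ν c (r + m))

lemma dT0_mem (r : Fin N → ℤ) : T.dT0 μ ν (-1) r ∈ HomD T (-1) := by
  rw [Tor.dT0]
  exact add_mem (neg_mem (d_mem' T _ _ (by simp [mIdx])))
    (Submodule.smul_mem _ _ (k_mem' T _ _ (by simp [mIdx])))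

lemma km1_mem (p : Fin N) : T.k (mIdx (-1) (0 : Fin N → ℤ)) p.succ ∈ HomD T (-1) :=
  k_mem' T _ _ (by simp [mIdx])

lemma eigen_Z (hT : T.IsToroidal B μ ν) (m r : Fin N → ℤ) :
    Zel T μ ν c m r ∈ Module.End.eigenspace (Dop T μ ν c) ((μ + ν) * c / 2 - 1) := by
  have heq : (μ + ν) * c / 2 + ((-1 : ℤ) : ℂ) = (μ + ν) * c / 2 - 1 := by
    push_cast
    ring
  have h1 := eigen_smul T μ ν c hT (eigen_w T μ ν c m) (dT0_mem T μ ν r)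
  rw [heq] at h1
  refine sub_mem h1 (Submodule.smul_mem _ _ (Submodule.sum_mem _ fun p _ =>
    Submodule.smul_mem _ _ ?_))
  have h2 := eigen_smul T μ ν c hT (eigen_w T μ ν c (r + m)) (km1_mem T p)
  rw [heq] at h2
  exact h2

lemma killpos_w {d : ℤ} (hd : 1 ≤ d) {x : T.G} (hx : x ∈ HomD T d) (m' : Fin N → ℤ) :
    T.uι x • wv T μ ν c m' = 0 := by
  induction hx using Submodule.span_induction with
  | mem y hy =>
    obtain ⟨ρ, hρ, hy⟩ := hy
    have hρ' : ρ = mIdx d (Fin.tail ρ) := by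
      rw [mIdx_def, ← hρ]
      exact (Fin.cons_self_tail ρ).symm
    rcases hy with ⟨x0, rfl⟩ | ⟨p, rfl⟩ | ⟨p, rfl⟩
    · rw [hρ']
      exact rel_tg T μ ν c d (le_trans zero_le_one hd) _ x0 m'
    · rw [hρ']
      exact rel_kj T μ ν c d hd _ p m'
    · rw [hρ']
      exact rel_dj T μ ν c d hd _ p m'
  | zero => rw [map_zero T.uι, zero_smul]
  | add a b _ _ ha hb => rw [map_add T.uι, add_smul, ha, hb, add_zero]
  | smul t a _ ha => rw [map_smul T.uι, smul_assoc, ha, smul_zero]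

lemma sum_eval (ρ : Idx N) (t : Fin N → ℤ) (m' : Fin N → ℤ) :
    T.uι (∑ p : Fin (N + 1), (ρ p : ℂ) • T.k (mIdx 0 t) p) • wv T μ ν c m'
      = ((ρ 0 : ℂ) * c) • wv T μ ν c (m' + t) := by
  have hmap : T.uι (∑ p : Fin (N + 1), (ρ p : ℂ) • T.k (mIdx 0 t) p)
      = ∑ p : Fin (N + 1), (ρ p : ℂ) • T.uι (T.k (mIdx 0 t) p) := by
    rw [← LieHom.coe_toLinearMap, map_sum]
    exact Finset.sum_congr rfl fun p _ => by rw [map_smul, LieHom.coe_toLinearMap]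
  rw [hmap, Finset.sum_smul, Fin.sum_univ_succ, smul_assoc, rel_k0]
  rw [Finset.sum_eq_zero fun p _ => by rw [smul_assoc, rel_kp, smul_zero], add_zero,
    smul_smul]

lemma kSum_eval (ρ σ : Idx N) (t : Fin N → ℤ) (h : ρ + σ = mIdx 0 t) (m' : Fin N → ℤ) :
    T.uι (T.kSum ρ σ) • wv T μ ν c m' = ((ρ 0 : ℂ) * c) • wv T μ ν c (m' + t) := by
  rw [Tor.kSum, h]
  exact sum_eval T μ ν c ρ t m'

lemma red_Z {d : ℤ} (hd : 1 ≤ d) {y : T.G} (hy : y ∈ HomD T d) (m r : Fin N → ℤ) :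
    T.uι y • Zel T μ ν c m r
      = T.uι ⁅y, T.dT0 μ ν (-1) r⁆ • wv T μ ν c m
        - c⁻¹ • ∑ p : Fin N, (m p : ℂ) •
            (T.uι ⁅y, T.k (mIdx (-1) 0) p.succ⁆ • wv T μ ν c (r + m)) := by
  rw [Zel, smul_sub]
  congr 1
  · rw [smul_smul_lie, killpos_w T μ ν c hd hy, smul_zero, zero_add]
  · rw [← smul_comm c⁻¹ (T.uι y), Finset.smul_sum]
    congr 1
    refine Finset.sum_congr rfl fun p _ => ?_
    rw [← smul_comm ((m p : ℂ)) (T.uι y), smul_smul_lie, killpos_w T μ ν c hd hy,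
      smul_zero, zero_add]

lemma sing_tg (hT : T.IsToroidal B μ ν) (m r s' : Fin N → ℤ) (x0 : g) :
    T.uι (T.tg (mIdx 1 s') x0) • Zel T μ ν c m r = 0 := by
  have hmem : T.tg (mIdx 1 s') x0 ∈ HomD T 1 := tg_mem' T _ _ (by simp [mIdx])
  rw [red_Z T μ ν c le_rfl hmem]
  have hb1 : ⁅T.tg (mIdx 1 s') x0, T.dT0 μ ν (-1) r⁆
      = ((mIdx 1 s' 0 : ℤ) : ℂ) • T.tg (mIdx (-1) r + mIdx 1 s') x0 := by
    rw [Tor.dT0, lie_add, lie_neg, lie_smul,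
      ← lie_skew (T.tg (mIdx 1 s') x0) (T.d (mIdx (-1) r) 0), hT.br_dg, neg_neg,
      ← lie_skew (T.tg (mIdx 1 s') x0) (T.k (mIdx (-1) r) 0), hT.br_kg, neg_zero,
      smul_zero, add_zero]
  have e1 : T.uι ⁅T.tg (mIdx 1 s') x0, T.dT0 μ ν (-1) r⁆ • wv T μ ν c m = 0 := by
    rw [hb1, show mIdx (-1) r + mIdx 1 s' = mIdx 0 (r + s') by rw [mIdx_add]; norm_num,
      map_smul T.uι, smul_assoc, rel_tg T μ ν c 0 le_rfl (r + s') x0 m, smul_zero]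
  have e2 : ∀ p : Fin N, (m p : ℂ) •
      (T.uι ⁅T.tg (mIdx 1 s') x0, T.k (mIdx (-1) 0) p.succ⁆ • wv T μ ν c (r + m)) = 0 := by
    intro p
    rw [← lie_skew (T.tg (mIdx 1 s') x0) (T.k (mIdx (-1) 0) p.succ), hT.br_kg, neg_zero,
      map_zero T.uι, zero_smul, smul_zero]
  rw [e1, Finset.sum_eq_zero fun p _ => e2 p, smul_zero, sub_zero]

lemma sing_k (hT : T.IsToroidal B μ ν) (m r s' : Fin N → ℤ) (b : Fin (N + 1)) :
    T.uι (T.k (mIdx 1 s') b) • Zel T μ ν c m r = 0 := by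
  have hmem : T.k (mIdx 1 s') b ∈ HomD T 1 := k_mem' T _ _ (by simp [mIdx])
  rw [red_Z T μ ν c le_rfl hmem]
  have hI : mIdx (-1) r + mIdx 1 s' = mIdx 0 (r + s') := by rw [mIdx_add]; norm_num
  have hb1 : ⁅T.k (mIdx 1 s') b, T.dT0 μ ν (-1) r⁆
      = ((mIdx 1 s' 0 : ℤ) : ℂ) • T.k (mIdx (-1) r + mIdx 1 s') b
        + (if (0 : Fin (N + 1)) = b then (1 : ℂ) else 0)
            • T.kSum (mIdx (-1) r) (mIdx 1 s') := by
    rw [Tor.dT0, lie_add, lie_neg, lie_smul,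
      ← lie_skew (T.k (mIdx 1 s') b) (T.d (mIdx (-1) r) 0), hT.br_dk, neg_neg,
      hT.br_kk, smul_zero, add_zero]
  have e1 : T.uι ⁅T.k (mIdx 1 s') b, T.dT0 μ ν (-1) r⁆ • wv T μ ν c m = 0 := by
    rw [hb1, map_add T.uι, map_smul T.uι, map_smul T.uι, add_smul, smul_assoc,
      smul_assoc, hI, kSum_eval T μ ν c _ _ (r + s') hI m]
    rcases Fin.eq_zero_or_eq_succ b with rfl | ⟨q, rfl⟩
    · rw [rel_k0 T μ ν c (r + s') m]
      simp only [eq_self_iff_true, if_true, mIdx_apply_zero]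
      push_cast
      module
    · rw [rel_kp T μ ν c (r + s') q m, smul_zero, zero_add,
        if_neg (Ne.symm (Fin.succ_ne_zero q)), zero_smul]
  have e2 : ∀ p : Fin N, (m p : ℂ) •
      (T.uι ⁅T.k (mIdx 1 s') b, T.k (mIdx (-1) 0) p.succ⁆ • wv T μ ν c (r + m)) = 0 := by
    intro p
    rw [hT.br_kk, map_zero T.uι, zero_smul, smul_zero]
  rw [e1, Finset.sum_eq_zero fun p _ => e2 p, smul_zero, sub_zero]

lemma sing_d0 (hT : T.IsToroidal B μ ν) (m r s' : Fin N → ℤ) :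
    T.uι (T.d (mIdx 1 s') 0) • Zel T μ ν c m r = 0 := by
  have hmem : T.d (mIdx 1 s') 0 ∈ HomD T 1 := d_mem' T _ _ (by simp [mIdx])
  rw [red_Z T μ ν c le_rfl hmem]
  have hI : mIdx 1 s' + mIdx (-1) r = mIdx 0 (s' + r) := by rw [mIdx_add]; norm_num
  have hI2 : mIdx 1 s' + mIdx (-1) (0 : Fin N → ℤ) = mIdx 0 (s' + 0) := by
    rw [mIdx_add]; norm_num
  have e1 : T.uι ⁅T.d (mIdx 1 s') 0, T.dT0 μ ν (-1) r⁆ • wv T μ ν c m = 0 := by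
    rw [Tor.dT0, lie_add, lie_neg, lie_smul, hT.br_dd, hT.br_dk, hI]
    simp only [map_add, map_sub, map_neg, map_smul,
      neg_smul, add_smul, sub_smul, smul_assoc, neg_add_rev, neg_sub, neg_neg]
    rw [rel_d0 T μ ν c (s' + r) m, sum_eval T μ ν c (mIdx (-1) r) (s' + r) m,
      kSum_eval T μ ν c _ _ (s' + r) hI m, rel_k0 T μ ν c (s' + r) m]
    simp only [eq_self_iff_true, if_true, mIdx_apply_zero]
    push_cast
    module
  have e2 : ∀ p : Fin N, (m p : ℂ) •
      (T.uι ⁅T.d (mIdx 1 s') 0, T.k (mIdx (-1) 0) p.succ⁆ • wv T μ ν c (r + m)) = 0 := by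
    intro p
    rw [hT.br_dk, hI2, if_neg (Ne.symm (Fin.succ_ne_zero p)), zero_smul, add_zero,
      map_smul T.uι, smul_assoc, rel_kp T μ ν c (s' + 0) p (r + m), smul_zero,
      smul_zero]
  rw [e1, Finset.sum_eq_zero fun p _ => e2 p, smul_zero, sub_zero]

lemma sing_dA (hT : T.IsToroidal B μ ν) (hc : c ≠ 0) (m r s' : Fin N → ℤ) (a : Fin N) :
    T.uι (T.d (mIdx 1 s') a.succ) • Zel T μ ν c m r = 0 := by
  have hmem : T.d (mIdx 1 s') a.succ ∈ HomD T 1 := d_mem' T _ _ (by simp [mIdx])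
  rw [red_Z T μ ν c le_rfl hmem]
  have hI : mIdx 1 s' + mIdx (-1) r = mIdx 0 (s' + r) := by rw [mIdx_add]; norm_num
  have hI2 : mIdx 1 s' + mIdx (-1) (0 : Fin N → ℤ) = mIdx 0 (s' + 0) := by
    rw [mIdx_add]; norm_num
  have e1 : T.uι ⁅T.d (mIdx 1 s') a.succ, T.dT0 μ ν (-1) r⁆ • wv T μ ν c m
      = (m a : ℂ) • wv T μ ν c (m + (s' + r)) := by
    rw [Tor.dT0, lie_add, lie_neg, lie_smul, hT.br_dd, hT.br_dk, hI]
    rw [if_neg (Fin.succ_ne_zero a), zero_smul, add_zero]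
    simp only [map_add, map_sub, map_neg, map_smul,
      neg_smul, add_smul, sub_smul, smul_assoc, neg_add_rev, neg_sub, neg_neg]
    rw [rel_d0 T μ ν c (s' + r) m, rel_dp T μ ν c (s' + r) a m,
      sum_eval T μ ν c (mIdx (-1) r) (s' + r) m, rel_k0 T μ ν c (s' + r) m]
    simp only [mIdx_apply_zero, mIdx_apply_succ]
    match_scalars
    push_cast [Pi.add_apply]
    ring
  have e2 : ∀ p : Fin N,
      T.uι ⁅T.d (mIdx 1 s') a.succ, T.k (mIdx (-1) 0) p.succ⁆ • wv T μ ν c (r + m)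
        = (if a = p then (1 : ℂ) else 0) • (c • wv T μ ν c ((r + m) + (s' + 0))) := by
    intro p
    rw [hT.br_dk, mIdx_apply_succ, Pi.zero_apply, Int.cast_zero, zero_smul, zero_add]
    rw [map_smul T.uι, smul_assoc, kSum_eval T μ ν c _ _ (s' + 0) hI2 (r + m),
      mIdx_apply_zero]
    simp only [Fin.succ_inj]
    norm_num
  rw [e1]
  have e3 : (∑ p : Fin N, (m p : ℂ) •
      (T.uι ⁅T.d (mIdx 1 s') a.succ, T.k (mIdx (-1) 0) p.succ⁆ • wv T μ ν c (r + m)))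
      = (m a : ℂ) • (c • wv T μ ν c ((r + m) + (s' + 0))) := by
    rw [Finset.sum_congr rfl fun p _ => by
      rw [e2 p, smul_comm ((m p : ℂ)) _, ite_smul, one_smul, zero_smul]]
    rw [Finset.sum_ite_eq Finset.univ a
      fun p => (m p : ℂ) • (c • wv T μ ν c ((r + m) + (s' + 0))), if_pos (Finset.mem_univ a)]
  rw [e3, show (r + m) + (s' + 0) = m + (s' + r) by ring, smul_smul, smul_smul,
    sub_eq_zero]
  match_scalars
  field_simp

lemma kill_Z (hT : T.IsToroidal B μ ν) (hc : c ≠ 0) (m r : Fin N → ℤ) {d : ℤ}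
    (hd : 1 ≤ d) {x : T.G} (hx : x ∈ HomD T d) :
    T.uι x • Zel T μ ν c m r = 0 := by
  induction hx using Submodule.span_induction with
  | mem y hy =>
    rcases eq_or_lt_of_le hd with heq | hlt
    · obtain ⟨ρ, hρ, hy⟩ := hy
      have h1 : ρ 0 = 1 := hρ.trans heq.symm
      have hρ' : ρ = mIdx 1 (Fin.tail ρ) := by
        rw [mIdx_def, ← h1]
        exact (Fin.cons_self_tail ρ).symm
      rcases hy with ⟨x0, rfl⟩ | ⟨p, rfl⟩ | ⟨p, rfl⟩
      · rw [hρ']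
        exact sing_tg T μ ν c hT m r _ x0
      · rw [hρ']
        exact sing_k T μ ν c hT m r _ p
      · rw [hρ']
        rcases Fin.eq_zero_or_eq_succ p with rfl | ⟨q, rfl⟩
        · exact sing_d0 T μ ν c hT m r _
        · exact sing_dA T μ ν c hT hc m r _ q
    · have hy' : y ∈ HomD T d := Submodule.subset_span hy
      rw [red_Z T μ ν c hd hy' m r]
      have hd1 : (1 : ℤ) ≤ d + -1 := by omega
      have h1 : T.uι ⁅y, T.dT0 μ ν (-1) r⁆ • wv T μ ν c m = 0 :=
        killpos_w T μ ν c hd1 (lie_mem T μ ν hT hy' (dT0_mem T μ ν r)) m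
      have h2 : ∀ p : Fin N,
          T.uι ⁅y, T.k (mIdx (-1) 0) p.succ⁆ • wv T μ ν c (r + m) = 0 :=
        fun p => killpos_w T μ ν c hd1 (lie_mem T μ ν hT hy' (km1_mem T p)) (r + m)
      rw [h1, Finset.sum_eq_zero fun p _ => by rw [h2 p, smul_zero], smul_zero, sub_zero]
  | zero => rw [map_zero T.uι, zero_smul]
  | add a b _ _ ha hb => rw [map_add T.uι, add_smul, ha, hb, add_zero]
  | smul t a _ ha => rw [map_smul T.uι, smul_assoc, ha, smul_zero]

lemma list_sum_ex (l : List (ℤ × T.G)) (h : 1 ≤ (l.map Prod.fst).sum) :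
    ∃ pr ∈ l, 1 ≤ pr.1 := by
  by_contra hno
  push_neg at hno
  have key : ∀ (l' : List (ℤ × T.G)), (∀ pr ∈ l', pr.1 ≤ 0) →
      (l'.map Prod.fst).sum ≤ 0 := by
    intro l'
    induction l' with
    | nil => simp
    | cons a t ih =>
      intro h'
      rw [List.map_cons, List.sum_cons]
      have ha := h' a (List.mem_cons_self)
      have ht := ih fun pr hpr => h' pr (List.mem_cons_of_mem _ hpr)
      omega
  have := key l fun pr hpr => by
    have := hno pr hpr
    omega
  omega

lemma sorting (hT : T.IsToroidal B μ ν) {v : T.MT0 μ ν c}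
    (hv : ∀ d : ℤ, 1 ≤ d → ∀ x ∈ HomD T d, T.uι x • v = 0) :
    ∀ (n : ℕ) (L : List (ℤ × T.G)), L.length = n →
      (∀ pr ∈ L, pr.2 ∈ HomD T pr.1) → 1 ≤ (L.map Prod.fst).sum →
      ((L.map fun pr => T.uι pr.2).prod) • v = 0 := by
  intro n
  induction n using Nat.strong_induction_on with
  | _ n IH =>
    have inner : ∀ (L₂ L₁ : List (ℤ × T.G)) (d : ℤ) (x : T.G), 1 ≤ d → x ∈ HomD T d →
        (L₁ ++ (d, x) :: L₂).length = n →
        (∀ pr ∈ L₁ ++ (d, x) :: L₂, pr.2 ∈ HomD T pr.1) →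
        1 ≤ ((L₁ ++ (d, x) :: L₂).map Prod.fst).sum →
        (((L₁ ++ (d, x) :: L₂).map fun pr => T.uι pr.2).prod) • v = 0 := by
      intro L₂
      induction L₂ with
      | nil =>
        intro L₁ d x hd hx _ _ _
        rw [List.map_append, List.prod_append, List.map_cons, List.map_nil,
          List.prod_cons, List.prod_nil, mul_one, mul_smul, hv d hd x hx, smul_zero]
      | cons ey L₂' ihL =>
        intro L₁ d x hd hx hlen hmem hsum
        have hy2 : ey.2 ∈ HomD T ey.1 := hmem ey (by simp)
        rw [List.map_append, List.prod_append, List.map_cons, List.prod_cons,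
          List.map_cons, List.prod_cons, mul_smul, mul_smul, mul_smul, smul_smul_lie,
          smul_add]
        have h1 : ((L₁ ++ ey :: (d, x) :: L₂').map fun pr => T.uι pr.2).prod • v = 0 := by
          have hh := ihL (L₁ ++ [ey]) d x hd hx
            (by simpa using hlen) ?_ ?_
          · rwa [List.append_assoc, List.singleton_append] at hh
          · intro pr hpr
            refine hmem pr ?_
            simp only [List.append_assoc, List.singleton_append, List.mem_append,
              List.mem_cons] at hpr ⊢
            tauto
          · rw [List.append_assoc, List.singleton_append]
            simp only [List.map_append, List.map_cons, List.sum_append, List.sum_cons] at hsum ⊢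
            omega
        have h2 : ((L₁ ++ (d + ey.1, ⁅x, ey.2⁆) :: L₂').map fun pr => T.uι pr.2).prod • v
            = 0 := by
          refine IH (L₁ ++ (d + ey.1, ⁅x, ey.2⁆) :: L₂').length ?_ _ rfl ?_ ?_
          · simp only [List.length_append, List.length_cons] at hlen ⊢
            omega
          · intro pr hpr
            rcases List.mem_append.mp hpr with hL | hc
            · exact hmem pr (List.mem_append.mpr (Or.inl hL))
            · rcases List.mem_cons.mp hc with rfl | hL2
              · exact lie_mem T μ ν hT hx hy2
              · exact hmem pr (by simp [hL2])
          · simp only [List.map_append, List.map_cons, List.sum_append, List.sum_cons]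
              at hsum ⊢
            omega
        rw [List.map_append, List.prod_append, List.map_cons, List.prod_cons,
          List.map_cons, List.prod_cons, mul_smul, mul_smul, mul_smul] at h1
        rw [List.map_append, List.prod_append, List.map_cons, List.prod_cons,
          mul_smul, mul_smul] at h2
        rw [h1, h2, add_zero]
    intro L hlen hmem hsum
    obtain ⟨pr, hprL, hpr1⟩ := list_sum_ex T L hsum
    obtain ⟨L₁, L₂, hLeq⟩ := List.append_of_mem hprL
    subst hLeq
    exact inner L₂ L₁ pr.1 pr.2 hpr1 (hmem pr (by simp)) hlen hmem hsum

lemma Zel_mem_Mrad (hT : T.IsToroidal B μ ν) (hc : c ≠ 0) (m r : Fin N → ℤ) :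
    Zel T μ ν c m r ∈ T.Mrad μ ν c := by
  classical
  by_cases h0 : wv T μ ν c (0 : Fin N → ℤ) = 0
  · have hall : ∀ m' : Fin N → ℤ, wv T μ ν c m' = 0 := by
      intro m'
      have h1 : T.uι (T.k (mIdx 0 m') 0) • wv T μ ν c (0 : Fin N → ℤ)
          = c • wv T μ ν c m' := by
        rw [rel_k0 T μ ν c m' (0 : Fin N → ℤ), zero_add]
      rw [h0, smul_zero] at h1
      rcases smul_eq_zero.mp h1.symm with h | h
      · exact absurd h hc
      · exact h
    rw [Zel, hall m, hall (r + m)]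
    simp only [smul_zero, Finset.sum_const_zero, sub_zero]
    exact zero_mem _
  · have hprop : Submodule.span T.U {Zel T μ ν c m r} ≠ ⊤ := by
      intro htop
      have hw : wv T μ ν c 0 ∈ Submodule.span T.U {Zel T μ ν c m r} := by
        rw [htop]; exact Submodule.mem_top
      obtain ⟨u, hu⟩ := Submodule.mem_span_singleton.mp hw
      have hEsup : ∀ u' ∈ Submodule.span ℂ (MonSet T), u' • Zel T μ ν c m r ∈
          (⨆ (θ : ℂ) (_ : θ ≠ (μ + ν) * c / 2),
            Module.End.eigenspace (Dop T μ ν c) θ) := by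
        intro u' hu'
        induction hu' using Submodule.span_induction with
        | mem u0 h =>
          obtain ⟨L, hLmem, rfl⟩ := h
          by_cases hsum : 1 ≤ (L.map Prod.fst).sum
          · rw [sorting T μ ν c hT
              (fun d hd x hx => kill_Z T μ ν c hT hc m r hd hx) L.length L rfl hLmem hsum]
            exact zero_mem _
          · push_neg at hsum
            have hm := eigen_prod T μ ν c hT (eigen_Z T μ ν c hT m r) L hLmem
            have hne : (μ + ν) * c / 2 - 1 + (((L.map Prod.fst).sum : ℤ) : ℂ)
                ≠ (μ + ν) * c / 2 := by
              intro h
              have h' : (((L.map Prod.fst).sum : ℤ) : ℂ) = 1 := by linear_combination h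
              have h'' : ((L.map Prod.fst).sum : ℤ) = 1 := by exact_mod_cast h'
              omega
            exact Submodule.mem_iSup_of_mem _ (Submodule.mem_iSup_of_mem hne hm)
        | zero => rw [zero_smul]; exact zero_mem _
        | add a b _ _ ha hb => rw [add_smul]; exact add_mem ha hb
        | smul t a _ ha => rw [smul_assoc]; exact Submodule.smul_mem _ _ ha
      have h1 := hEsup u (mem_span_monset T u)
      rw [hu] at h1
      have h2 := eigen_w T μ ν c (0 : Fin N → ℤ)
      have hdisj := Module.End.eigenspaces_iSupIndep (Dop T μ ν c) ((μ + ν) * c / 2)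
      exact h0 (Submodule.disjoint_def.mp hdisj _ h2 h1)
    have hle : Submodule.span T.U {Zel T μ ν c m r} ≤ T.Mrad μ ν c := le_sSup hprop
    exact hle (Submodule.mem_span_singleton_self _)

end Aux
/-- Lemma 4.9(a): (t₀^{-1}t^r d̃₀)·q^m
= (1/c) Σ_p m_p (t₀^{-1}k_p)·q^{m+r} in L(T₀). -/
theorem statement17 (N : ℕ) (hN : 1 ≤ N) (g : Type) [LieRing g] [LieAlgebra ℂ g]
    [FiniteDimensional ℂ g] [LieAlgebra.IsSimple ℂ g]
    (B : g →ₗ[ℂ] g →ₗ[ℂ] ℂ)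
    (hBsymm : ∀ x y : g, B x y = B y x)
    (hBnondeg : ∀ x : g, (∀ y : g, B x y = 0) → x = 0)
    (hBinv : ∀ x y z : g, B ⁅x, y⁆ z = B x ⁅y, z⁆)
    (μ ν : ℂ) (T : Tor N g) (hT : T.IsToroidal B μ ν)
    (c : ℂ) (hc : c ≠ 0) (m r : Fin N → ℤ) :
    T.uι (T.dT0 μ ν (-1) r) • T.qL μ ν c m =
      c⁻¹ • ∑ p : Fin N, (m p : ℂ) •
        (T.uι (T.k (mIdx (-1) 0) p.succ) • T.qL μ ν c (r + m)) := by
  have key := Zel_mem_Mrad T μ ν c hT hc m r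
  have hq : ∀ m', T.qL μ ν c m'
      = Submodule.Quotient.mk (p := T.Mrad μ ν c) (wv T μ ν c m') := fun _ => rfl
  calc T.uι (T.dT0 μ ν (-1) r) • T.qL μ ν c m
      = (id (Submodule.Quotient.mk (p := T.Mrad μ ν c)
          (T.uι (T.dT0 μ ν (-1) r) • wv T μ ν c m)) : T.LT0 μ ν c) := by
        rw [hq, Submodule.Quotient.mk_smul]
        rfl
    _ = (id (Submodule.Quotient.mk (p := T.Mrad μ ν c)
          (c⁻¹ • ∑ p : Fin N, (m p : ℂ) •
            (T.uι (T.k (mIdx (-1) 0) p.succ) • wv T μ ν c (r + m)))) : T.LT0 μ ν c) := by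
        show (Submodule.Quotient.mk _ : T.MT0 μ ν c ⧸ T.Mrad μ ν c) = Submodule.Quotient.mk _
        rw [Submodule.Quotient.eq]
        exact key
    _ = c⁻¹ • ∑ p : Fin N, (m p : ℂ) •
          (T.uι (T.k (mIdx (-1) 0) p.succ) • T.qL μ ν c (r + m)) := by
        rw [Submodule.Quotient.mk_smul]
        refine congrArg (fun z : T.LT0 μ ν c => c⁻¹ • z) ?_
        rw [show (Submodule.Quotient.mk : T.MT0 μ ν c → T.MT0 μ ν c ⧸ T.Mrad μ ν c)
          = ⇑(T.Mrad μ ν c).mkQ from rfl, map_sum]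
        refine Finset.sum_congr rfl fun p _ => ?_
        rw [Submodule.mkQ_apply, Submodule.Quotient.mk_smul, Submodule.Quotient.mk_smul, hq]
        rfl

end ToroidalPaper
end
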